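/- Let s ∈ (0,1), p ∈ (1,∞) with sp > 1. Let γ : ℝ/ℤ → ℝ² be a C¹ closed curve with constant speed, and suppose there exist t₁ ≠ t₂ with γ(t₁) = γ(t₂) and γ'(t₁) ≠ γ'(t₂). Then the energy ∬_{(ℝ/ℤ)²} |γ'(t) − γ'(t')|^p / |γ(t) − γ(t')|^{1+sp} dt dt' = +∞. -/

import Mathlib

/-!
By periodicity the crossing parameters may be taken in `[0, 1)`. With `v`, `w` the two tangents,
`γ (τ₁ + u) - γ (τ₂ + u')` is the chord `u • v - u' • w` up to `o(u + u')`, and since `‖v‖ = ‖w‖`,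
`v ≠ w`, the identity `‖u • v - u' • w‖² = ‖v‖² (u - u')² + u u' ‖v - w‖²` makes that chord
comparable to `u + u'`. So on a small square `(0, a)²` the points `γ (τ₁ + u)`, `γ (τ₂ + u')` are
distinct (which matters, as the integrand is `0` where `γ t = γ t'`) and at distance at most
`2 ‖v‖ (u + u')`, while by continuity of `γ'` the tangents there stay `‖v - w‖ / 2` apart. The
integrand is thus at least a multiple of `(u + u') ^ (-(1 + s p))`, whose integral over the square
diverges because `1 + s p ≥ 2`.
-/

open MeasureTheory Set Filter Topology

theorem Filter.Eventually.forall_Ioo_nhdsGT {α : Type*} [TopologicalSpace α] [LinearOrder α]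
    [OrderTopology α] [NoMaxOrder α] {p : α → Prop} {b : α} (h : ∀ᶠ x in 𝓝[>] b, p x) :
    ∀ᶠ a in 𝓝[>] b, ∀ x ∈ Ioo b a, p x := by
  obtain ⟨c, hc, hsub⟩ := mem_nhdsGT_iff_exists_Ioo_subset.1 h
  filter_upwards [Ioc_mem_nhdsGT hc] with a ha x hx
  exact hsub ⟨hx.1, hx.2.trans_le ha.2⟩

theorem HasDerivAt.eventually_norm_sub_sub_smul_le {F : Type*} [NormedAddCommGroup F]
    [NormedSpace ℝ F] {f : ℝ → F} {f' : F} {x μ : ℝ} (hf : HasDerivAt f f' x) (hμ : 0 < μ) :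
    ∀ᶠ h in 𝓝[>] 0, ‖f (x + h) - f x - h • f'‖ ≤ μ * h := by
  filter_upwards [((hasDerivAt_iff_isLittleO_nhds_zero.1 hf).def hμ).filter_mono
    nhdsWithin_le_nhds, self_mem_nhdsWithin] with h hh hpos
  rwa [Real.norm_of_nonneg (le_of_lt hpos)] at hh

theorem norm_pos_of_norm_eq_of_ne {F : Type*} [NormedAddCommGroup F] {v w : F} (h : ‖v‖ = ‖w‖)
    (hne : v ≠ w) : 0 < ‖v‖ :=
  norm_pos_iff.2 fun hv ↦ hne <| by rw [hv, eq_comm, ← norm_eq_zero, ← h, hv, norm_zero]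

section InnerProductSpace

variable {E : Type*} [NormedAddCommGroup E] [InnerProductSpace ℝ E]

theorem norm_smul_sub_smul_sq {v w : E} (h : ‖v‖ = ‖w‖) (u u' : ℝ) :
    ‖u • v - u' • w‖ ^ 2 = ‖v‖ ^ 2 * (u - u') ^ 2 + u * u' * ‖v - w‖ ^ 2 := by
  rw [norm_sub_sq_real, norm_sub_sq_real, norm_smul, norm_smul, real_inner_smul_left,
    real_inner_smul_right, Real.norm_eq_abs, Real.norm_eq_abs, mul_pow, mul_pow, sq_abs, sq_abs,
    ← h]
  ring

theorem min_mul_add_le_norm_smul_sub_smul {v w : E} (h : ‖v‖ = ‖w‖) {u u' : ℝ} (hu : 0 ≤ u)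
    (hu' : 0 ≤ u') : min ‖v‖ (‖v - w‖ / 2) * (u + u') ≤ ‖u • v - u' • w‖ := by
  set κ := min ‖v‖ (‖v - w‖ / 2)
  have hκ : 0 ≤ κ := le_min (norm_nonneg _) (by positivity)
  have hκv : κ ^ 2 ≤ ‖v‖ ^ 2 := pow_le_pow_left₀ hκ (min_le_left _ _) 2
  have hκvw : (2 * κ) ^ 2 ≤ ‖v - w‖ ^ 2 :=
    pow_le_pow_left₀ (by positivity) (by linarith [min_le_right ‖v‖ (‖v - w‖ / 2)]) 2
  rw [← pow_le_pow_iff_left₀ (by positivity) (norm_nonneg _) two_ne_zero,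
    norm_smul_sub_smul_sq h]
  nlinarith [mul_le_mul_of_nonneg_right hκv (sq_nonneg (u - u')),
    mul_le_mul_of_nonneg_left hκvw (mul_nonneg hu hu')]

theorem eventually_forall_Ioo_norm_chord_pos_and_le {γ : ℝ → E} {v w : E} {τ₁ τ₂ : ℝ}
    (h₁ : HasDerivAt γ v τ₁) (h₂ : HasDerivAt γ w τ₂) (hcross : γ τ₁ = γ τ₂)
    (hvw : ‖v‖ = ‖w‖) (hne : v ≠ w) :
    ∀ᶠ a in 𝓝[>] 0, ∀ u ∈ Ioo 0 a, ∀ u' ∈ Ioo 0 a,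
      0 < ‖γ (τ₁ + u) - γ (τ₂ + u')‖ ∧ ‖γ (τ₁ + u) - γ (τ₂ + u')‖ ≤ 2 * ‖v‖ * (u + u') := by
  set κ := min ‖v‖ (‖v - w‖ / 2)
  have hκ : 0 < κ :=
    lt_min (norm_pos_of_norm_eq_of_ne hvw hne) (half_pos (norm_sub_pos_iff.2 hne))
  filter_upwards [(h₁.eventually_norm_sub_sub_smul_le (half_pos hκ)).forall_Ioo_nhdsGT,
    (h₂.eventually_norm_sub_sub_smul_le (half_pos hκ)).forall_Ioo_nhdsGT]
    with a ha₁ ha₂ u hu u' hu'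
  set r := (γ (τ₂ + u') - γ τ₂ - u' • w) - (γ (τ₁ + u) - γ τ₁ - u • v) with hr_def
  have hsplit : γ (τ₁ + u) - γ (τ₂ + u') = (u • v - u' • w) - r := by
    rw [hr_def, hcross]; abel
  have hr : ‖r‖ ≤ κ / 2 * (u + u') :=
    (norm_sub_le _ _).trans (by linarith [ha₁ u hu, ha₂ u' hu'])
  have hchord : ‖u • v - u' • w‖ ≤ ‖v‖ * (u + u') := by
    refine (norm_sub_le _ _).trans_eq ?_
    rw [norm_smul, norm_smul, ← hvw, Real.norm_of_nonneg hu.1.le, Real.norm_of_nonneg hu'.1.le]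
    ring
  have hsum : 0 < u + u' := add_pos hu.1 hu'.1
  rw [hsplit]
  constructor
  · linarith [norm_sub_norm_le (u • v - u' • w) r, mul_pos hκ hsum,
      min_mul_add_le_norm_smul_sub_smul hvw hu.1.le hu'.1.le]
  · linarith [norm_sub_le (u • v - u' • w) r, mul_pos hκ hsum,
      mul_le_mul_of_nonneg_right (min_le_left _ _ : κ ≤ ‖v‖) hsum.le]

end InnerProductSpace

theorem eventually_forall_Ioo_half_norm_sub_le {F : Type*} [NormedAddCommGroup F] {f : ℝ → F}
    {τ₁ τ₂ : ℝ} (h₁ : ContinuousAt f τ₁) (h₂ : ContinuousAt f τ₂) (hne : f τ₁ ≠ f τ₂) :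
    ∀ᶠ a in 𝓝[>] 0, ∀ u ∈ Ioo 0 a, ∀ u' ∈ Ioo 0 a,
      ‖f τ₁ - f τ₂‖ / 2 ≤ ‖f (τ₁ + u) - f (τ₂ + u')‖ := by
  set ε := ‖f τ₁ - f τ₂‖
  have hε : 0 < ε / 4 := by have := norm_sub_pos_iff.2 hne; positivity
  have hnear : ∀ {τ}, ContinuousAt f τ → ∀ᶠ h in 𝓝[>] (0 : ℝ), ‖f (τ + h) - f τ‖ < ε / 4 :=
    fun {τ} hτ ↦ by
      have := hτ.tendsto.comp ((continuous_const_add τ).tendsto' 0 τ (add_zero τ))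
      simpa only [dist_eq_norm, Function.comp_def] using
        (Metric.tendsto_nhds.1 this _ hε).filter_mono nhdsWithin_le_nhds
  filter_upwards [(hnear h₁).forall_Ioo_nhdsGT, (hnear h₂).forall_Ioo_nhdsGT]
    with a ha₁ ha₂ u hu u' hu'
  have hu₁ := ha₁ u hu
  rw [norm_sub_rev] at hu₁
  linarith [ha₂ u' hu', norm_sub_le_norm_sub_add_norm_sub (f τ₁) (f (τ₁ + u)) (f τ₂),
    norm_sub_le_norm_sub_add_norm_sub (f (τ₁ + u)) (f (τ₂ + u')) (f τ₂)]

theorem Function.Periodic.deriv {𝕜 F : Type*} [NontriviallyNormedField 𝕜] [NormedAddCommGroup F]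
    [NormedSpace 𝕜 F] {f : 𝕜 → F} {c : 𝕜} (h : Function.Periodic f c) :
    Function.Periodic (deriv f) c := fun x ↦ by
  rw [← deriv_comp_add_const, show (fun y ↦ f (y + c)) = f from funext h]

theorem div_rpow_mul_rpow_neg_le {A X B Y x p q : ℝ} (hp : 0 ≤ p) (hq : 0 ≤ q) (hA : 0 ≤ A)
    (hAX : A ≤ X) (hB : 0 ≤ B) (hx : 0 < x) (hY : 0 < Y) (hYB : Y ≤ B * x) :
    A ^ p / B ^ q * x ^ (-q) ≤ X ^ p / Y ^ q := by
  rw [Real.rpow_neg hx.le, ← div_eq_mul_inv, div_div, ← Real.mul_rpow hB hx.le]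
  gcongr
  exact Real.rpow_nonneg (hA.trans hAX) p

theorem lintegral_Ioo_rpow_eq_top {a r : ℝ} (ha : 0 < a) (hr : r ≤ -1) :
    ∫⁻ x in Ioo 0 a, ENNReal.ofReal (x ^ r) = ⊤ := by
  by_contra h
  have hint : IntegrableOn (fun x : ℝ ↦ x ^ r) (Ioo 0 a) :=
    (lintegral_ofReal_ne_top_iff_integrable
      ((continuousOn_id.rpow_const fun x hx ↦ Or.inl hx.1.ne').aestronglyMeasurable
        measurableSet_Ioo)
      ((ae_restrict_iff' measurableSet_Ioo).2
        (.of_forall fun x hx ↦ Real.rpow_nonneg hx.1.le r))).1 h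
  linarith [(intervalIntegral.integrableOn_Ioo_rpow_iff ha).1 hint]

theorem setLIntegral_Ioo_eq_comp_const_add (g : ℝ → ENNReal) (τ a : ℝ) :
    ∫⁻ t in Ioo τ (τ + a), g t = ∫⁻ u in Ioo 0 a, g (τ + u) := by
  have h := (measurePreserving_add_left volume τ).setLIntegral_comp_preimage_emb
    (measurableEmbedding_addLeft τ) g (Ioo τ (τ + a))
  rw [preimage_const_add_Ioo, sub_self, add_sub_cancel_left] at h
  exact h.symm

theorem lintegral_Ioo_lintegral_Ioo_comp_add_le {s t : Set ℝ} (F : ℝ → ℝ → ENNReal)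
    {τ₁ τ₂ a : ℝ} (h₁ : Ioo τ₁ (τ₁ + a) ⊆ s) (h₂ : Ioo τ₂ (τ₂ + a) ⊆ t) :
    ∫⁻ u in Ioo 0 a, ∫⁻ u' in Ioo 0 a, F (τ₁ + u) (τ₂ + u') ≤ ∫⁻ x in s, ∫⁻ y in t, F x y := by
  calc ∫⁻ u in Ioo 0 a, ∫⁻ u' in Ioo 0 a, F (τ₁ + u) (τ₂ + u')
      = ∫⁻ x in Ioo τ₁ (τ₁ + a), ∫⁻ y in Ioo τ₂ (τ₂ + a), F x y := by
        simp_rw [setLIntegral_Ioo_eq_comp_const_add]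
    _ ≤ _ := (lintegral_mono fun x ↦ lintegral_mono_set h₂).trans (lintegral_mono_set h₁)

theorem lintegral_Ioo_lintegral_Ioo_mul_add_rpow_eq_top {a q K : ℝ} (ha : 0 < a) (hq : 2 ≤ q)
    (hK : 0 < K) :
    ∫⁻ u in Ioo 0 a, ∫⁻ u' in Ioo 0 a, ENNReal.ofReal (K * (u + u') ^ (-q)) = ⊤ := by
  refine eq_top_iff.2 <| calc
    ⊤ = ∫⁻ u in Ioo 0 a, ENNReal.ofReal (K * 2 ^ (-q)) * ENNReal.ofReal (u ^ (1 - q)) := by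
        rw [lintegral_const_mul' _ _ ENNReal.ofReal_ne_top,
          lintegral_Ioo_rpow_eq_top ha (by linarith), ENNReal.mul_top (by simp; positivity)]
    _ ≤ ∫⁻ u in Ioo 0 a, ∫⁻ u' in Ioo 0 u, ENNReal.ofReal (K * (u + u') ^ (-q)) := by
        refine setLIntegral_mono' measurableSet_Ioo fun u hu ↦ ?_
        have h2u : K * (2 * u) ^ (-q) * u = K * 2 ^ (-q) * u ^ (1 - q) := by
          rw [Real.mul_rpow zero_le_two hu.1.le, mul_assoc, mul_assoc, mul_assoc, sub_eq_neg_add,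
            Real.rpow_add_one hu.1.ne']
        calc ENNReal.ofReal (K * 2 ^ (-q)) * ENNReal.ofReal (u ^ (1 - q))
            = ∫⁻ _ in Ioo 0 u, ENNReal.ofReal (K * (2 * u) ^ (-q)) := by
              rw [setLIntegral_const, Real.volume_Ioo, sub_zero,
                ← ENNReal.ofReal_mul (by positivity : (0 : ℝ) ≤ K * 2 ^ (-q)),
                ← ENNReal.ofReal_mul (by have := hu.1; positivity : (0 : ℝ) ≤ K * (2 * u) ^ (-q)),
                h2u]
          _ ≤ _ := setLIntegral_mono' measurableSet_Ioo fun u' hu' ↦ ENNReal.ofReal_le_ofReal <|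
              mul_le_mul_of_nonneg_left (Real.rpow_le_rpow_of_nonpos (by linarith [hu'.1, hu.1])
                (by linarith [hu'.2]) (by linarith)) hK.le
    _ ≤ _ := setLIntegral_mono' measurableSet_Ioo fun u hu ↦
        lintegral_mono_set (Ioo_subset_Ioo_right hu.2.le)

theorem stmt_6_general (s p : ℝ) (hp : 1 < p) (hsp : 1 < s * p)
    (γ : ℝ → ℂ) (hper : Function.Periodic γ 1) (hC1 : ContDiff ℝ 1 γ)
    (c : ℝ) (hspeed : ∀ t : ℝ, ‖deriv γ t‖ = c)
    (t₁ t₂ : ℝ) (heq : γ t₁ = γ t₂) (hder : deriv γ t₁ ≠ deriv γ t₂) :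
    (∫⁻ t in Icc (0:ℝ) 1, ∫⁻ t' in Icc (0:ℝ) 1,
        ENNReal.ofReal (‖deriv γ t - deriv γ t'‖ ^ p / ‖γ t - γ t'‖ ^ (1 + s * p))) = ⊤ := by
  have hjet : Function.Periodic (fun t ↦ (γ t, deriv γ t)) 1 :=
    fun t ↦ Prod.ext (hper t) (hper.deriv t)
  obtain ⟨τ₁, hτ₁, h₁⟩ := hjet.exists_mem_Ico₀ one_pos t₁
  obtain ⟨τ₂, hτ₂, h₂⟩ := hjet.exists_mem_Ico₀ one_pos t₂
  simp only [Prod.mk.injEq] at h₁ h₂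
  have hne : deriv γ τ₁ ≠ deriv γ τ₂ := h₁.2 ▸ h₂.2 ▸ hder
  have hnorm : ‖deriv γ τ₁‖ = ‖deriv γ τ₂‖ := by rw [hspeed, hspeed]
  have hdiff := hC1.differentiable one_ne_zero
  have hcont := hC1.continuous_deriv le_rfl
  obtain ⟨a, ⟨⟨hcurve, hsep⟩, ha₁⟩, ha₂⟩ := (((eventually_forall_Ioo_norm_chord_pos_and_le
    (hdiff τ₁).hasDerivAt (hdiff τ₂).hasDerivAt (h₁.1 ▸ h₂.1 ▸ heq) hnorm hne).and
    (eventually_forall_Ioo_half_norm_sub_le hcont.continuousAt hcont.continuousAt hne)).and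
    (Ioo_mem_nhdsGT (sub_pos.2 hτ₁.2))).and (Ioo_mem_nhdsGT (sub_pos.2 hτ₂.2)) |>.exists
  have hK : 0 < (‖deriv γ τ₁ - deriv γ τ₂‖ / 2) ^ p / (2 * ‖deriv γ τ₁‖) ^ (1 + s * p) := by
    have := norm_sub_pos_iff.2 hne
    have := norm_pos_of_norm_eq_of_ne hnorm hne
    positivity
  have hdiv := lintegral_Ioo_lintegral_Ioo_mul_add_rpow_eq_top ha₁.1
    (by linarith : 2 ≤ 1 + s * p) hK
  refine eq_top_iff.2 <| hdiv.symm.trans_le <| (setLIntegral_mono' measurableSet_Ioo fun u hu ↦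
      setLIntegral_mono' measurableSet_Ioo fun u' hu' ↦ ?_).trans <|
    lintegral_Ioo_lintegral_Ioo_comp_add_le _
      (Ioo_subset_Icc_self.trans (Icc_subset_Icc hτ₁.1 (by linarith [ha₁.2])))
      (Ioo_subset_Icc_self.trans (Icc_subset_Icc hτ₂.1 (by linarith [ha₂.2])))
  obtain ⟨hpos, hle⟩ := hcurve u hu u' hu'
  exact ENNReal.ofReal_le_ofReal <| div_rpow_mul_rpow_neg_le (by linarith) (by linarith)
    (by positivity) (hsep u hu u' hu') (by positivity) (add_pos hu.1 hu'.1) hpos hle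

/-- for s ∈ (0,1), p ∈ (1,∞) with sp > 1, a C¹ constant-speed closed curve
with a transversal self-intersection (γ(t₁) = γ(t₂), γ'(t₁) ≠ γ'(t₂)) has infinite
tangent-oscillation energy. -/
theorem stmt_6 (s p : ℝ) (hs : s ∈ Ioo (0:ℝ) 1) (hp : 1 < p) (hsp : 1 < s * p)
    (γ : ℝ → ℂ) (hper : Function.Periodic γ 1) (hC1 : ContDiff ℝ 1 γ)
    (c : ℝ) (hc : 0 < c) (hspeed : ∀ t : ℝ, ‖deriv γ t‖ = c)
    (t₁ t₂ : ℝ) (hne : t₁ ≠ t₂) (heq : γ t₁ = γ t₂) (hder : deriv γ t₁ ≠ deriv γ t₂) :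
    (∫⁻ t in Icc (0:ℝ) 1, ∫⁻ t' in Icc (0:ℝ) 1,
        ENNReal.ofReal (‖deriv γ t - deriv γ t'‖ ^ p / ‖γ t - γ t'‖ ^ (1 + s * p))) = ⊤ :=
  stmt_6_general s p hp hsp γ hper hC1 c hspeed t₁ t₂ heq hder
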